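/- arXiv:1612.02298 — 3 statements merged into one kernel-verified Lean document; each statement's English description precedes it below -/
import Mathlib

section
/- For the discrete Laplace distribution DL(α) with 0 < α < 1 (Pr(N=i) = ((1−α)/(1+α))·α^{|i|} for i ∈ ℤ) and any integers z, z', the probability ratio satisfies α^{|z−z'|} ≤ Pr(z+N=s)/Pr(z'+N=s) ≤ α^{−|z−z'|} for all s ∈ ℤ. -/
/-- Probability mass function of the discrete Laplace distribution DL(α) on ℤ. -/
noncomputable def discreteLaplacePMF (α : ℝ) (i : ℤ) : ℝ :=
  ((1 - α) / (1 + α)) * α ^ i.natAbs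

theorem discreteLaplacePMF_div {α : ℝ} (hα0 : 0 < α) (hα1 : α ≠ 1) (i j : ℤ) :
    discreteLaplacePMF α i / discreteLaplacePMF α j = α ^ (|i| - |j|) := by
  have hnorm : (1 - α) / (1 + α) ≠ 0 :=
    div_ne_zero (sub_ne_zero.mpr hα1.symm) (by positivity)
  rw [discreteLaplacePMF, discreteLaplacePMF, mul_div_mul_left _ _ hnorm,
    zpow_sub₀ hα0.ne', Int.abs_eq_natAbs, Int.abs_eq_natAbs, zpow_natCast, zpow_natCast]

/-- Probability-ratio bound for shifted discrete Laplace noise: for `0 < α < 1` and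
integers `z z' s`, `α^{|z−z'|} ≤ Pr(z+N=s)/Pr(z'+N=s) ≤ α^{−|z−z'|}`. -/
theorem discrete_laplace_ratio (α : ℝ) (hα0 : 0 < α) (hα1 : α < 1) (z z' s : ℤ) :
    α ^ |z - z'| ≤ discreteLaplacePMF α (s - z) / discreteLaplacePMF α (s - z') ∧
    discreteLaplacePMF α (s - z) / discreteLaplacePMF α (s - z') ≤ α ^ (-|z - z'|) := by
  rw [discreteLaplacePMF_div hα0 hα1.ne]
  have hdist : |(|s - z| - |s - z'|)| ≤ |z - z'| := by
    simpa only [sub_sub_sub_cancel_left, abs_sub_comm z'] using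
      abs_abs_sub_abs_le_abs_sub (s - z) (s - z')
  obtain ⟨hlower, hupper⟩ := abs_le.mp hdist
  exact ⟨zpow_le_zpow_right_of_le_one₀ hα0 hα1.le hupper,
    zpow_le_zpow_right_of_le_one₀ hα0 hα1.le hlower⟩
end

section
/- Discrete Laplace mechanism for iDP: let f be an integer-valued query with local sensitivity LS_f(D) = max over neighbors D' of |f(D')−f(D)| > 0. The mechanism κ(x) = f(x) + N with N ~ DL(exp(−ε/LS_f(D))) satisfies ε-individual differential privacy at D. -/
/-!
Shifting the centre of DL(α) by `d` changes the mass at any point by a factor between `α ^ |d|`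
and `α ^ (-|d|)`, because `|i| ≤ |i - j| + |j|`. With `α = exp (-ε / Δ)` and `|d| ≤ Δ`, that
factor is at least `exp (-ε)`, and the upper bound is the lower bound with the two neighbours
exchanged.
-/

theorem discreteLaplacePMF_nonneg {α : ℝ} (hα₀ : 0 ≤ α) (hα₁ : α ≤ 1) (i : ℤ) :
    0 ≤ discreteLaplacePMF α i :=
  mul_nonneg (div_nonneg (by linarith) (by linarith)) (pow_nonneg hα₀ _)

theorem pow_natAbs_sub_mul_discreteLaplacePMF_le {α : ℝ} (hα₀ : 0 ≤ α) (hα₁ : α ≤ 1) (i j : ℤ) :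
    α ^ (i - j).natAbs * discreteLaplacePMF α j ≤ discreteLaplacePMF α i := by
  have hnatAbs : i.natAbs ≤ (i - j).natAbs + j.natAbs := by
    simpa using Int.natAbs_add_le (i - j) j
  rw [discreteLaplacePMF, discreteLaplacePMF, mul_left_comm, ← pow_add]
  exact mul_le_mul_of_nonneg_left (pow_le_pow_of_le_one hα₀ hα₁ hnatAbs)
    (div_nonneg (by linarith) (by linarith))

theorem exp_neg_le_exp_neg_div_pow {ε Δ : ℝ} (hε : 0 ≤ ε) {k : ℕ} (hk : (k : ℝ) ≤ Δ) :
    Real.exp (-ε) ≤ Real.exp (-ε / Δ) ^ k := by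
  rw [← Real.exp_nat_mul, Real.exp_le_exp, mul_div_assoc', mul_neg, neg_div, neg_le_neg_iff]
  rcases (k.cast_nonneg.trans hk).eq_or_lt with rfl | hΔ
  · -- `Δ = 0`: division by zero gives `0`, so the claim is `exp (-ε) ≤ 1`
    simpa using hε
  · rw [div_le_iff₀ hΔ]
    exact (mul_le_mul_of_nonneg_right hk hε).trans_eq (mul_comm Δ ε)

theorem exp_neg_mul_discreteLaplacePMF_le {ε Δ : ℝ} (hε : 0 ≤ ε) {z z' : ℤ}
    (hzz' : |(z : ℝ) - z'| ≤ Δ) (s : ℤ) :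
    Real.exp (-ε) * discreteLaplacePMF (Real.exp (-ε / Δ)) (s - z')
      ≤ discreteLaplacePMF (Real.exp (-ε / Δ)) (s - z) := by
  have hα₁ : Real.exp (-ε / Δ) ≤ 1 :=
    Real.exp_le_one_iff.mpr <|
      div_nonpos_of_nonpos_of_nonneg (neg_nonpos.mpr hε) ((abs_nonneg _).trans hzz')
  have hshift : (((s - z) - (s - z')).natAbs : ℝ) ≤ Δ := by
    rw [Nat.cast_natAbs, sub_sub_sub_cancel_left, abs_sub_comm]
    exact_mod_cast hzz'
  calc Real.exp (-ε) * discreteLaplacePMF (Real.exp (-ε / Δ)) (s - z')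
      ≤ Real.exp (-ε / Δ) ^ ((s - z) - (s - z')).natAbs
          * discreteLaplacePMF (Real.exp (-ε / Δ)) (s - z') :=
        mul_le_mul_of_nonneg_right (exp_neg_le_exp_neg_div_pow hε hshift)
          (discreteLaplacePMF_nonneg (Real.exp_nonneg _) hα₁ _)
    _ ≤ discreteLaplacePMF (Real.exp (-ε / Δ)) (s - z) :=
        pow_natAbs_sub_mul_discreteLaplacePMF_le (Real.exp_nonneg _) hα₁ _ _

theorem discrete_laplace_mechanism_idp_general {α : Type*} [DecidableEq α] {n : ℕ}
    (f : (Fin n → α) → ℤ) (ε Δ : ℝ) (hε : 0 < ε) (D : Fin n → α)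
    (hLS : IsGreatest {r : ℝ | ∃ D' : Fin n → α, hammingDist D D' = 1 ∧
      r = |(f D' : ℝ) - (f D : ℝ)|} Δ) :
    ∀ D' : Fin n → α, hammingDist D D' = 1 → ∀ s : ℤ,
      Real.exp (-ε) * discreteLaplacePMF (Real.exp (-ε / Δ)) (s - f D')
          ≤ discreteLaplacePMF (Real.exp (-ε / Δ)) (s - f D) ∧
      discreteLaplacePMF (Real.exp (-ε / Δ)) (s - f D)
          ≤ Real.exp ε * discreteLaplacePMF (Real.exp (-ε / Δ)) (s - f D') := by
  intro D' hD' s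
  have hdist : |(f D' : ℝ) - f D| ≤ Δ := hLS.2 ⟨D', hD', rfl⟩
  refine ⟨exp_neg_mul_discreteLaplacePMF_le hε.le (by rwa [abs_sub_comm]) s, ?_⟩
  rw [← inv_mul_le_iff₀ (Real.exp_pos ε), ← Real.exp_neg]
  exact exp_neg_mul_discreteLaplacePMF_le hε.le hdist s

/-- Discrete Laplace mechanism for iDP: if `Δ > 0` is the local sensitivity of the
integer-valued query `f` at `D`, then the mechanism `κ(x) = f(x) + N` with
`N ~ DL(exp(−ε/Δ))` (so `Pr(κ(x)=s) = p(s − f x)`) satisfies ε-iDP at `D`: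
for every neighbor `D'` and every outcome `s`,
`exp(−ε)·Pr(κ(D')=s) ≤ Pr(κ(D)=s) ≤ exp(ε)·Pr(κ(D')=s)`. -/
theorem discrete_laplace_mechanism_idp {α : Type*} [DecidableEq α] {n : ℕ}
    (f : (Fin n → α) → ℤ) (ε Δ : ℝ) (hε : 0 < ε) (hΔ : 0 < Δ) (D : Fin n → α)
    (hLS : IsGreatest {r : ℝ | ∃ D' : Fin n → α, hammingDist D D' = 1 ∧
      r = |(f D' : ℝ) - (f D : ℝ)|} Δ) :
    ∀ D' : Fin n → α, hammingDist D D' = 1 → ∀ s : ℤ,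
      Real.exp (-ε) * discreteLaplacePMF (Real.exp (-ε / Δ)) (s - f D')
          ≤ discreteLaplacePMF (Real.exp (-ε / Δ)) (s - f D) ∧
      discreteLaplacePMF (Real.exp (-ε / Δ)) (s - f D)
          ≤ Real.exp ε * discreteLaplacePMF (Real.exp (-ε / Δ)) (s - f D') :=
  discrete_laplace_mechanism_idp_general f ε Δ hε D hLS
end

section
/- For a sorted dataset x₁ ≤ ⋯ ≤ x_n with n = 2m+1 real entries, the local sensitivity of the median (under modification of one record) equals max{x_{m+1} − x_m, x_{m+2} − x_{m+1}} (i.e., max of gaps to the left and right neighbors of the median, with 1-based indexing where the median is x_{m+1}). -/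
/-- The median of a tuple of `2m+1` reals: the `(m+1)`-th smallest entry
(entry of index `m`, 0-based, of the sorted tuple). -/
noncomputable def medianOf {m : ℕ} (D : Fin (2 * m + 1) → ℝ) : ℝ :=
  D (Tuple.sort D ⟨m, by omega⟩)

/-!
The median is characterised by counting: `medianOf f ≤ a` as soon as `m + 1` entries are `≤ a`,
and `a ≤ medianOf f` as soon as `m + 1` entries are `≥ a`. If `D` is sorted
and `D'` differs from it in one entry, at least `m + 1` of the entries `D 0, …, D (m+1)` survive
in `D'`, so `medianOf D' ≤ D (m+1)`; symmetrically `D (m-1) ≤ medianOf D'`. Both bounds are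
attained by moving an extreme entry past the median to the other side.
-/

section

open Finset Function

lemma exists_forall_ne_eq_of_hammingDist_le_one {ι β : Type*} [Fintype ι] [Nonempty ι]
    [DecidableEq β] {x y : ι → β} (h : hammingDist x y ≤ 1) : ∃ j, ∀ i ≠ j, y i = x i := by
  obtain ⟨j, hj⟩ := card_le_one_iff_subset_singleton.1 h
  refine ⟨j, fun i hij => ?_⟩
  by_contra hne
  exact hij (mem_singleton.1 (hj (mem_filter.2 ⟨mem_univ _, Ne.symm hne⟩)))

lemma hammingDist_update_self {ι β : Type*} [Fintype ι] [DecidableEq ι] [DecidableEq β]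
    {x : ι → β} {j : ι} {b : β} (h : x j ≠ b) : hammingDist x (update x j b) = 1 := by
  rw [hammingDist, card_eq_one]
  refine ⟨j, ext fun i => ?_⟩
  by_cases hij : i = j
  · simp [hij, h]
  · simp [hij]

variable {m : ℕ}

lemma medianOf_eq_of_monotone {D : Fin (2 * m + 1) → ℝ} (hD : Monotone D) :
    medianOf D = D ⟨m, by omega⟩ :=
  (congrFun (Tuple.comp_sort_eq_comp_iff_monotone (σ := Equiv.refl _) |>.mpr hD) _).symm

lemma card_le_medianOf (f : Fin (2 * m + 1) → ℝ) : m + 1 ≤ #{i | f i ≤ medianOf f} := by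
  calc m + 1 = #((Iic ⟨m, by omega⟩).map (Tuple.sort f).toEmbedding) := by simp
    _ ≤ _ := card_le_card fun i hi => by
      obtain ⟨k, hk, rfl⟩ := mem_map.1 hi
      exact mem_filter.2 ⟨mem_univ _, Tuple.monotone_sort f (mem_Iic.1 hk)⟩

lemma card_medianOf_le (f : Fin (2 * m + 1) → ℝ) : m + 1 ≤ #{i | medianOf f ≤ f i} := by
  calc m + 1 = #((Ici ⟨m, by omega⟩).map (Tuple.sort f).toEmbedding) := by simp; omega
    _ ≤ _ := card_le_card fun i hi => by
      obtain ⟨k, hk, rfl⟩ := mem_map.1 hi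
      exact mem_filter.2 ⟨mem_univ _, Tuple.monotone_sort f (mem_Ici.1 hk)⟩

lemma medianOf_le_of_card_le {f : Fin (2 * m + 1) → ℝ} {a : ℝ}
    (h : m + 1 ≤ #{i | f i ≤ a}) : medianOf f ≤ a := by
  by_contra! ha
  have hsub : ({i | medianOf f ≤ f i} : Finset _) ⊆ ({i | ¬f i ≤ a} : Finset _) :=
    monotone_filter_right _ fun i _ (hi : medianOf f ≤ f i) => not_le.2 (ha.trans_le hi)
  have hsplit := card_filter_add_card_filter_not (s := univ) (fun i => f i ≤ a)
  rw [card_univ, Fintype.card_fin] at hsplit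
  have := card_le_card hsub
  have := card_medianOf_le f
  omega

lemma le_medianOf_of_card_le {f : Fin (2 * m + 1) → ℝ} {a : ℝ}
    (h : m + 1 ≤ #{i | a ≤ f i}) : a ≤ medianOf f := by
  by_contra! ha
  have hsub : ({i | f i ≤ medianOf f} : Finset _) ⊆ ({i | ¬a ≤ f i} : Finset _) :=
    monotone_filter_right _ fun i _ (hi : f i ≤ medianOf f) => not_le.2 (hi.trans_lt ha)
  have hsplit := card_filter_add_card_filter_not (s := univ) (fun i => a ≤ f i)
  rw [card_univ, Fintype.card_fin] at hsplit
  have := card_le_card hsub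
  have := card_le_medianOf f
  omega

variable {D D' : Fin (2 * m + 1) → ℝ} {j k : Fin (2 * m + 1)}

lemma medianOf_le_of_forall_ne_eq (hD : Monotone D) (hD' : ∀ i ≠ j, D' i = D i)
    (hk : m < k.val) : medianOf D' ≤ D k := by
  refine medianOf_le_of_card_le ?_
  calc m + 1 ≤ #(Iic k) - 1 := by rw [Fin.card_Iic]; omega
    _ ≤ #((Iic k).erase j) := pred_card_le_card_erase
    _ ≤ _ := card_le_card fun i hi => by
      obtain ⟨hij, hik⟩ := mem_erase.1 hi
      exact mem_filter.2 ⟨mem_univ _, (hD' i hij).trans_le (hD (mem_Iic.1 hik))⟩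

lemma le_medianOf_of_forall_ne_eq (hD : Monotone D) (hD' : ∀ i ≠ j, D' i = D i)
    (hk : k.val < m) : D k ≤ medianOf D' := by
  refine le_medianOf_of_card_le ?_
  calc m + 1 ≤ #(Ici k) - 1 := by rw [Fin.card_Ici]; omega
    _ ≤ #((Ici k).erase j) := pred_card_le_card_erase
    _ ≤ _ := card_le_card fun i hi => by
      obtain ⟨hij, hik⟩ := mem_erase.1 hi
      exact mem_filter.2 ⟨mem_univ _, (hD (mem_Ici.1 hik)).trans_eq (hD' i hij).symm⟩

lemma le_medianOf_update (hD : Monotone D) (hjk : j < k) (hk : k.val ≤ m + 1) {b : ℝ}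
    (hb : D k ≤ b) : D k ≤ medianOf (update D j b) := by
  refine le_medianOf_of_card_le ?_
  have hj : j ∉ Ici k := by simpa using hjk
  calc m + 1 ≤ #(cons j (Ici k) hj) := by rw [card_cons, Fin.card_Ici]; omega
    _ ≤ _ := card_le_card fun i hi => by
      refine mem_filter.2 ⟨mem_univ _, ?_⟩
      obtain rfl | hik := mem_cons.1 hi
      · simpa using hb
      · rw [update_of_ne (ne_of_mem_of_not_mem hik hj)]
        exact hD (mem_Ici.1 hik)

lemma medianOf_update_le (hD : Monotone D) (hkj : k < j) (hk : m ≤ k.val + 1) {b : ℝ}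
    (hb : b ≤ D k) : medianOf (update D j b) ≤ D k := by
  refine medianOf_le_of_card_le ?_
  have hj : j ∉ Iic k := by simpa using hkj
  calc m + 1 ≤ #(cons j (Iic k) hj) := by rw [card_cons, Fin.card_Iic]; omega
    _ ≤ _ := card_le_card fun i hi => by
      refine mem_filter.2 ⟨mem_univ _, ?_⟩
      obtain rfl | hik := mem_cons.1 hi
      · simpa using hb
      · rw [update_of_ne (ne_of_mem_of_not_mem hik hj)]
        exact hD (mem_Iic.1 hik)

lemma medianOf_mem_Icc_of_hammingDist_eq_one (hD : Monotone D) (h : hammingDist D D' = 1)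
    {lo hi : Fin (2 * m + 1)} (hlo : lo.val < m) (hhi : m < hi.val) :
    medianOf D' ∈ Set.Icc (D lo) (D hi) := by
  obtain ⟨j, hj⟩ := exists_forall_ne_eq_of_hammingDist_le_one h.le
  exact ⟨le_medianOf_of_forall_ne_eq hD hj hlo, medianOf_le_of_forall_ne_eq hD hj hhi⟩

lemma exists_hammingDist_eq_one_medianOf_eq_of_val_add_one_eq (hD : Monotone D)
    (hk : k.val + 1 = m) :
    ∃ D', hammingDist D D' = 1 ∧ medianOf D' = D k := by
  have hlt : D k - 1 < D (Fin.last _) := by linarith [hD (Fin.le_last k)]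
  refine ⟨update D (Fin.last _) (D k - 1), hammingDist_update_self hlt.ne', le_antisymm ?_ ?_⟩
  · exact medianOf_update_le hD (by rw [Fin.lt_def, Fin.val_last]; omega) hk.ge (by linarith)
  · exact le_medianOf_of_forall_ne_eq hD (fun i hi => update_of_ne hi _ D) (by omega)

lemma exists_hammingDist_eq_one_medianOf_eq_of_val_eq_add_one (hD : Monotone D)
    (hk : k.val = m + 1) :
    ∃ D', hammingDist D D' = 1 ∧ medianOf D' = D k := by
  have hlt : D 0 < D k + 1 := by linarith [hD (Fin.zero_le k)]
  refine ⟨update D 0 (D k + 1), hammingDist_update_self hlt.ne, le_antisymm ?_ ?_⟩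
  · exact medianOf_le_of_forall_ne_eq hD (fun i hi => update_of_ne hi _ D) (by omega)
  · exact le_medianOf_update hD (by rw [Fin.lt_def, Fin.val_zero, hk]; omega) hk.le (by linarith)

end

/-- For a sorted tuple `x₁ ≤ ⋯ ≤ x_{2m+1}` of reals, the local sensitivity of the
median under modification of one record equals
`max {x_{m+1} − x_m, x_{m+2} − x_{m+1}}` (1-based indexing, median `x_{m+1}`). -/
theorem median_local_sensitivity (m : ℕ) (hm : 1 ≤ m) (D : Fin (2 * m + 1) → ℝ)
    (hsorted : Monotone D) :
    sSup {r : ℝ | ∃ D' : Fin (2 * m + 1) → ℝ, hammingDist D D' = 1 ∧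
        r = |medianOf D' - medianOf D|}
      = max (D ⟨m, by omega⟩ - D ⟨m - 1, by omega⟩)
            (D ⟨m + 1, by omega⟩ - D ⟨m, by omega⟩) := by
  have hmed : medianOf D = D ⟨m, by omega⟩ := medianOf_eq_of_monotone hsorted
  have hlo : D ⟨m - 1, by omega⟩ ≤ D ⟨m, by omega⟩ := hsorted (Fin.mk_le_mk.2 (by omega))
  have hhi : D ⟨m, by omega⟩ ≤ D ⟨m + 1, by omega⟩ := hsorted (Fin.mk_le_mk.2 (by omega))
  refine IsGreatest.csSup_eq ⟨?_, ?_⟩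
  · rcases max_choice (D ⟨m, by omega⟩ - D ⟨m - 1, by omega⟩)
      (D ⟨m + 1, by omega⟩ - D ⟨m, by omega⟩) with h | h <;> rw [h]
    · obtain ⟨D', hD', hmed'⟩ := exists_hammingDist_eq_one_medianOf_eq_of_val_add_one_eq
        (k := ⟨m - 1, by omega⟩) hsorted (by dsimp only; omega)
      exact ⟨D', hD', by rw [hmed', hmed, abs_of_nonpos (by linarith), neg_sub]⟩
    · obtain ⟨D', hD', hmed'⟩ := exists_hammingDist_eq_one_medianOf_eq_of_val_eq_add_one
        (k := ⟨m + 1, by omega⟩) hsorted rfl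
      exact ⟨D', hD', by rw [hmed', hmed, abs_of_nonneg (by linarith)]⟩
  · rintro r ⟨D', hD', rfl⟩
    obtain ⟨hlo', hhi'⟩ := medianOf_mem_Icc_of_hammingDist_eq_one
      (lo := ⟨m - 1, by omega⟩) (hi := ⟨m + 1, by omega⟩) hsorted hD' (by dsimp only; omega)
      (Nat.lt_succ_self m)
    rw [hmed, abs_sub_le_iff]
    constructor
    · exact le_max_of_le_right (by linarith)
    · exact le_max_of_le_left (by linarith)
end
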